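/- arXiv:2210.03707 — 2 statements merged into one kernel-verified Lean document; each statement's English description precedes it below -/
import Mathlib

section
/- Let n ≥ 3 and let b : ℝ² → ℝ be a smooth graphical translator with vertical velocity e₃ in ℝ³, i.e. ∑_{i=1}^{2} ∂_i( ∂_i b / √(1+|Db|²) ) = 1/√(1+|Db|²) on ℝ². Define u : ℝⁿ → ℝ by u(x₁, …, xₙ) = xₙ + √2·b(x₁, x₂). Then u is an entire graphical translator in ℝ^{n+1} with the non-vertical unit velocity T = (−eₙ + e_{n+1})/√2, and its mean curvature H = (T_{n+1} − ⟨Du, T'⟩)/√(1+|Du|²) = 1/√(1+|Db|²) is strictly positive everywhere. (Applied to the bowl soliton b, this produces a non-planar, entire, mean-convex graphical translator with non-vertical translating direction for every n ≥ 3.) -/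
open scoped ENNReal
open MeasureTheory

noncomputable section

/-- `u : Ω → ℝ` is a graphical translator with velocity `T = (T', Tlast) ∈ ℝⁿ × ℝ`:
`∑ i ∂_i(∂_i u / √(1+|Du|²)) = (Tlast − ⟨Du, T'⟩)/√(1+|Du|²)` on `Ω`. -/
def IsTranslator {n : ℕ} (Ω : Set (EuclideanSpace ℝ (Fin n)))
    (u : EuclideanSpace ℝ (Fin n) → ℝ)
    (T' : EuclideanSpace ℝ (Fin n)) (Tlast : ℝ) : Prop :=
  ∀ x ∈ Ω,
    (∑ i : Fin n, fderiv ℝ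
      (fun y => gradient u y i / Real.sqrt (1 + ‖gradient u y‖ ^ 2)) x
      (EuclideanSpace.single i 1))
    = (Tlast - (inner ℝ (gradient u x) T' : ℝ)) / Real.sqrt (1 + ‖gradient u x‖ ^ 2)

namespace RPTaux
open EuclideanSpace

lemma i0 {n : ℕ} (hn : 3 ≤ n) : 0 < n := by omega
lemma i1 {n : ℕ} (hn : 3 ≤ n) : 1 < n := by omega
lemma il {n : ℕ} (hn : 3 ≤ n) : n - 1 < n := by omega

lemma grad_apply {m : ℕ} (f : EuclideanSpace ℝ (Fin m) → ℝ) (x : EuclideanSpace ℝ (Fin m))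
    (i : Fin m) : gradient f x i = fderiv ℝ f x (EuclideanSpace.single i 1) := by
  have h1 : (inner ℝ (gradient f x) (EuclideanSpace.single i (1:ℝ)) : ℝ)
      = fderiv ℝ f x (EuclideanSpace.single i 1) := by
    rw [gradient]; exact InnerProductSpace.toDual_symm_apply
  rw [← h1, EuclideanSpace.inner_single_right]; simp

def pr (n : ℕ) (hn : 3 ≤ n) : EuclideanSpace ℝ (Fin n) →L[ℝ] EuclideanSpace ℝ (Fin 2) :=
  LinearMap.toContinuousLinearMap
    { toFun := fun x => WithLp.toLp 2 ![x ⟨0, i0 hn⟩, x ⟨1, i1 hn⟩]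
      map_add' := by intro x y; ext j; fin_cases j <;> rfl
      map_smul' := by intro c x; ext j; fin_cases j <;> rfl }

lemma pr_single_zero {n : ℕ} (hn : 3 ≤ n) :
    pr n hn (EuclideanSpace.single ⟨0, i0 hn⟩ 1) = EuclideanSpace.single 0 1 := by
  ext j
  fin_cases j <;>
    simp [pr, LinearMap.toContinuousLinearMap, EuclideanSpace.single_apply]

lemma pr_single_one {n : ℕ} (hn : 3 ≤ n) :
    pr n hn (EuclideanSpace.single ⟨1, i1 hn⟩ 1) = EuclideanSpace.single 1 1 := by
  ext j
  fin_cases j <;>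
    simp [pr, LinearMap.toContinuousLinearMap, EuclideanSpace.single_apply, Fin.ext_iff]

lemma pr_single_big {n : ℕ} (hn : 3 ≤ n) (i : Fin n) (hi : 2 ≤ i.val) :
    pr n hn (EuclideanSpace.single i 1) = 0 := by
  ext j
  fin_cases j <;>
    simp [pr, LinearMap.toContinuousLinearMap, EuclideanSpace.single_apply, Fin.ext_iff] <;>
    omega

lemma hasFDerivAt_u {n : ℕ} (hn : 3 ≤ n)
    (b : EuclideanSpace ℝ (Fin 2) → ℝ) (hb : ContDiff ℝ (⊤ : ℕ∞) b)
    (u : EuclideanSpace ℝ (Fin n) → ℝ)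
    (hu : ∀ x, u x = x ⟨n - 1, il hn⟩ +
      Real.sqrt 2 * b (WithLp.toLp 2 ![x ⟨0, i0 hn⟩, x ⟨1, i1 hn⟩]))
    (x : EuclideanSpace ℝ (Fin n)) :
    HasFDerivAt u
      ((EuclideanSpace.proj (⟨n - 1, il hn⟩ : Fin n)) +
        Real.sqrt 2 • (fderiv ℝ b (pr n hn x)).comp (pr n hn)) x := by
  have hbd : HasFDerivAt b (fderiv ℝ b (pr n hn x)) (pr n hn x) :=
    (hb.differentiable (by simp) _).hasFDerivAt
  have h2 := (hbd.comp x (pr n hn).hasFDerivAt).const_mul (Real.sqrt 2)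
  have h3 := ((EuclideanSpace.proj (⟨n - 1, il hn⟩ : Fin n)).hasFDerivAt (x := x)).add h2
  have hue : u = fun y => (EuclideanSpace.proj (⟨n - 1, il hn⟩ : Fin n)) y +
      Real.sqrt 2 * b (pr n hn y) := funext fun y => hu y
  rw [hue]; exact h3

/-- the gradient coordinates of u -/
lemma grad_u {n : ℕ} (hn : 3 ≤ n)
    (b : EuclideanSpace ℝ (Fin 2) → ℝ) (hb : ContDiff ℝ (⊤ : ℕ∞) b)
    (u : EuclideanSpace ℝ (Fin n) → ℝ)
    (hu : ∀ x, u x = x ⟨n - 1, il hn⟩ +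
      Real.sqrt 2 * b (WithLp.toLp 2 ![x ⟨0, i0 hn⟩, x ⟨1, i1 hn⟩]))
    (x : EuclideanSpace ℝ (Fin n)) (i : Fin n) :
    gradient u x i =
      if i = (⟨0, i0 hn⟩ : Fin n) then Real.sqrt 2 * gradient b (pr n hn x) 0
      else if i = (⟨1, i1 hn⟩ : Fin n) then Real.sqrt 2 * gradient b (pr n hn x) 1
      else if i = (⟨n - 1, il hn⟩ : Fin n) then 1 else 0 := by
  have hD := (hasFDerivAt_u hn b hb u hu x).fderiv
  rw [grad_apply, hD]
  simp only [ContinuousLinearMap.add_apply, ContinuousLinearMap.coe_smul',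
    Pi.smul_apply, ContinuousLinearMap.coe_comp', Function.comp_apply, smul_eq_mul,
    PiLp.proj_apply]
  by_cases h0 : i = (⟨0, i0 hn⟩ : Fin n)
  · subst h0
    rw [pr_single_zero hn, ← grad_apply]
    rw [if_pos rfl]
    have h : (EuclideanSpace.single (⟨0, i0 hn⟩ : Fin n) (1:ℝ)) ⟨n-1, il hn⟩ = 0 := by
      rw [EuclideanSpace.single_apply, if_neg (by simp [Fin.ext_iff]; omega)]
    rw [h, zero_add]
  · rw [if_neg h0]
    by_cases h1 : i = (⟨1, i1 hn⟩ : Fin n)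
    · subst h1
      rw [pr_single_one hn, ← grad_apply, if_pos rfl]
      have h : (EuclideanSpace.single (⟨1, i1 hn⟩ : Fin n) (1:ℝ)) ⟨n-1, il hn⟩ = 0 := by
        rw [EuclideanSpace.single_apply, if_neg (by simp [Fin.ext_iff]; omega)]
      rw [h, zero_add]
    · rw [if_neg h1]
      by_cases hm : i = (⟨n - 1, il hn⟩ : Fin n)
      · subst hm
        rw [if_pos rfl, pr_single_big hn _ (by simp; omega), map_zero, mul_zero, add_zero,
          EuclideanSpace.single_apply, if_pos rfl]
      · rw [if_neg hm]
        have hbig : 2 ≤ i.val := by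
          rcases Nat.lt_or_ge i.val 2 with h | h
          · exfalso; interval_cases hv : i.val
            · exact h0 (Fin.ext (by simpa using hv))
            · exact h1 (Fin.ext (by simpa using hv))
          · exact h
        rw [pr_single_big hn _ hbig, map_zero, mul_zero, add_zero,
          EuclideanSpace.single_apply, if_neg (by simp [Fin.ext_iff]; intro h; exact hm (Fin.ext h.symm))]

lemma norm_sq_eq {m : ℕ} (v : EuclideanSpace ℝ (Fin m)) :
    ‖v‖ ^ 2 = ∑ i, (v i) ^ 2 := by
  rw [PiLp.norm_sq_eq_of_L2]
  congr 1; funext i; rw [Real.norm_eq_abs, sq_abs]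

lemma norm_grad_u {n : ℕ} (hn : 3 ≤ n)
    (b : EuclideanSpace ℝ (Fin 2) → ℝ) (hb : ContDiff ℝ (⊤ : ℕ∞) b)
    (u : EuclideanSpace ℝ (Fin n) → ℝ)
    (hu : ∀ x, u x = x ⟨n - 1, il hn⟩ +
      Real.sqrt 2 * b (WithLp.toLp 2 ![x ⟨0, i0 hn⟩, x ⟨1, i1 hn⟩]))
    (x : EuclideanSpace ℝ (Fin n)) :
    ‖gradient u x‖ ^ 2 = 1 + 2 * ‖gradient b (pr n hn x)‖ ^ 2 := by
  rw [norm_sq_eq]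
  have key : ∀ i : Fin n, (gradient u x i) ^ 2 =
      (if i = (⟨0, i0 hn⟩ : Fin n) then 2 * (gradient b (pr n hn x) 0) ^ 2 else 0) +
      (if i = (⟨1, i1 hn⟩ : Fin n) then 2 * (gradient b (pr n hn x) 1) ^ 2 else 0) +
      (if i = (⟨n - 1, il hn⟩ : Fin n) then 1 else 0) := by
    intro i
    rw [grad_u hn b hb u hu x i]
    by_cases h0 : i = (⟨0, i0 hn⟩ : Fin n)
    · subst h0
      rw [if_pos rfl, if_pos rfl, if_neg (by simp [Fin.ext_iff]),
        if_neg (by simp [Fin.ext_iff]; omega)]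
      rw [mul_pow, Real.sq_sqrt (by norm_num : (0:ℝ) ≤ 2)]; ring
    · rw [if_neg h0, if_neg h0]
      by_cases h1 : i = (⟨1, i1 hn⟩ : Fin n)
      · subst h1
        rw [if_pos rfl, if_pos rfl, if_neg (by simp [Fin.ext_iff]; omega)]
        rw [mul_pow, Real.sq_sqrt (by norm_num : (0:ℝ) ≤ 2)]; ring
      · rw [if_neg h1, if_neg h1]
        by_cases hm : i = (⟨n - 1, il hn⟩ : Fin n)
        · rw [if_pos hm]; norm_num
        · rw [if_neg hm]; norm_num
  rw [Finset.sum_congr rfl fun i _ => key i]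
  rw [Finset.sum_add_distrib, Finset.sum_add_distrib]
  simp only [Finset.sum_ite_eq', Finset.mem_univ, if_true]
  rw [norm_sq_eq, Fin.sum_univ_two]; ring

lemma sqrt_norm_u {n : ℕ} (hn : 3 ≤ n)
    (b : EuclideanSpace ℝ (Fin 2) → ℝ) (hb : ContDiff ℝ (⊤ : ℕ∞) b)
    (u : EuclideanSpace ℝ (Fin n) → ℝ)
    (hu : ∀ x, u x = x ⟨n - 1, il hn⟩ +
      Real.sqrt 2 * b (WithLp.toLp 2 ![x ⟨0, i0 hn⟩, x ⟨1, i1 hn⟩]))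
    (x : EuclideanSpace ℝ (Fin n)) :
    Real.sqrt (1 + ‖gradient u x‖ ^ 2) =
      Real.sqrt 2 * Real.sqrt (1 + ‖gradient b (pr n hn x)‖ ^ 2) := by
  rw [norm_grad_u hn b hb u hu x, show (1:ℝ) + (1 + 2 * ‖gradient b (pr n hn x)‖ ^ 2)
    = 2 * (1 + ‖gradient b (pr n hn x)‖ ^ 2) by ring,
    Real.sqrt_mul (by norm_num)]

lemma contDiff_grad (b : EuclideanSpace ℝ (Fin 2) → ℝ) (hb : ContDiff ℝ (⊤ : ℕ∞) b) :
    ContDiff ℝ (⊤ : ℕ∞) (gradient b) := by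
  have h1 : ContDiff ℝ (⊤ : ℕ∞) (fderiv ℝ b) := hb.fderiv_right (by simp)
  exact ((InnerProductSpace.toDual ℝ (EuclideanSpace ℝ (Fin 2))).symm.contDiff).comp h1

lemma sqrt2_ne : Real.sqrt 2 ≠ 0 := by positivity

lemma sB_pos (b : EuclideanSpace ℝ (Fin 2) → ℝ) (z : EuclideanSpace ℝ (Fin 2)) :
    0 < Real.sqrt (1 + ‖gradient b z‖ ^ 2) := Real.sqrt_pos.2 (by positivity)

/-- evaluation of each divergence term -/
lemma term_eval {n : ℕ} (hn : 3 ≤ n)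
    (b : EuclideanSpace ℝ (Fin 2) → ℝ) (hb : ContDiff ℝ (⊤ : ℕ∞) b)
    (u : EuclideanSpace ℝ (Fin n) → ℝ)
    (hu : ∀ x, u x = x ⟨n - 1, il hn⟩ +
      Real.sqrt 2 * b (WithLp.toLp 2 ![x ⟨0, i0 hn⟩, x ⟨1, i1 hn⟩]))
    (x : EuclideanSpace ℝ (Fin n)) (i : Fin n) :
    fderiv ℝ (fun y => gradient u y i / Real.sqrt (1 + ‖gradient u y‖ ^ 2)) x
      (EuclideanSpace.single i 1) =
    if i = (⟨0, i0 hn⟩ : Fin n) then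
      fderiv ℝ (fun z => gradient b z 0 / Real.sqrt (1 + ‖gradient b z‖ ^ 2)) (pr n hn x)
        (EuclideanSpace.single 0 1)
    else if i = (⟨1, i1 hn⟩ : Fin n) then
      fderiv ℝ (fun z => gradient b z 1 / Real.sqrt (1 + ‖gradient b z‖ ^ 2)) (pr n hn x)
        (EuclideanSpace.single 1 1)
    else 0 := by
  have hgbd : Differentiable ℝ (gradient b) := (contDiff_grad b hb).differentiable (by simp)
  have hsBd : Differentiable ℝ (fun z => Real.sqrt (1 + ‖gradient b z‖ ^ 2)) := fun z =>
    ((differentiableAt_const 1).add (DifferentiableAt.norm_sq (𝕜 := ℝ) (hgbd z))).sqrt (ne_of_gt (by positivity : (0:ℝ) < 1 + ‖gradient b z‖ ^ 2))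
  have hGd : ∀ (j : Fin 2) (z : EuclideanSpace ℝ (Fin 2)),
      DifferentiableAt ℝ (fun w => gradient b w j / Real.sqrt (1 + ‖gradient b w‖ ^ 2)) z :=
    by
    intro j z
    simp only [div_eq_mul_inv]
    exact (((EuclideanSpace.proj j : EuclideanSpace ℝ (Fin 2) →L[ℝ] ℝ).differentiable.comp
      hgbd) z).mul ((hsBd z).inv (ne_of_gt (sB_pos b z)))
  by_cases h0 : i = (⟨0, i0 hn⟩ : Fin n)
  · subst h0
    rw [if_pos rfl]
    have hfun : (fun y => gradient u y (⟨0, i0 hn⟩ : Fin n) /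
        Real.sqrt (1 + ‖gradient u y‖ ^ 2)) =
        (fun z => gradient b z 0 / Real.sqrt (1 + ‖gradient b z‖ ^ 2)) ∘ (pr n hn) := by
      funext y
      rw [grad_u hn b hb u hu y, if_pos rfl, sqrt_norm_u hn b hb u hu y]
      exact mul_div_mul_left _ _ sqrt2_ne
    rw [hfun, fderiv_comp x (hGd 0 _) (pr n hn).differentiableAt,
      ContinuousLinearMap.fderiv, ContinuousLinearMap.comp_apply, pr_single_zero hn]
  · rw [if_neg h0]
    by_cases h1 : i = (⟨1, i1 hn⟩ : Fin n)
    · subst h1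
      rw [if_pos rfl]
      have hfun : (fun y => gradient u y (⟨1, i1 hn⟩ : Fin n) /
          Real.sqrt (1 + ‖gradient u y‖ ^ 2)) =
          (fun z => gradient b z 1 / Real.sqrt (1 + ‖gradient b z‖ ^ 2)) ∘ (pr n hn) := by
        funext y
        rw [grad_u hn b hb u hu y, if_neg h0, if_pos rfl, sqrt_norm_u hn b hb u hu y]
        exact mul_div_mul_left _ _ sqrt2_ne
      rw [hfun, fderiv_comp x (hGd 1 _) (pr n hn).differentiableAt,
        ContinuousLinearMap.fderiv, ContinuousLinearMap.comp_apply, pr_single_one hn]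
    · rw [if_neg h1]
      by_cases hm : i = (⟨n - 1, il hn⟩ : Fin n)
      · subst hm
        have hfun : (fun y => gradient u y (⟨n - 1, il hn⟩ : Fin n) /
            Real.sqrt (1 + ‖gradient u y‖ ^ 2)) =
            (fun z => 1 / (Real.sqrt 2 * Real.sqrt (1 + ‖gradient b z‖ ^ 2))) ∘ (pr n hn) := by
          funext y
          rw [grad_u hn b hb u hu y, if_neg h0, if_neg h1, if_pos rfl,
            sqrt_norm_u hn b hb u hu y]
          rfl
        have hcd : DifferentiableAt ℝ
            (fun z : EuclideanSpace ℝ (Fin 2) =>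
              1 / (Real.sqrt 2 * Real.sqrt (1 + ‖gradient b z‖ ^ 2))) (pr n hn x) := by
          simp only [one_div]
          exact (((differentiableAt_const _).mul (hsBd _)).inv (mul_pos (Real.sqrt_pos.2 (by norm_num)) (sB_pos b _)).ne')
        rw [hfun, fderiv_comp x hcd (pr n hn).differentiableAt,
          ContinuousLinearMap.fderiv, ContinuousLinearMap.comp_apply,
          pr_single_big hn (⟨n - 1, il hn⟩ : Fin n) (by simp; omega), map_zero]
      · have hfun : (fun y => gradient u y i / Real.sqrt (1 + ‖gradient u y‖ ^ 2)) =
            (fun _ : EuclideanSpace ℝ (Fin n) => (0:ℝ)) := by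
          funext y
          rw [grad_u hn b hb u hu y, if_neg h0, if_neg h1, if_neg hm, zero_div]
        rw [hfun, fderiv_fun_const]
        rfl

lemma grad_u_last {n : ℕ} (hn : 3 ≤ n)
    (b : EuclideanSpace ℝ (Fin 2) → ℝ) (hb : ContDiff ℝ (⊤ : ℕ∞) b)
    (u : EuclideanSpace ℝ (Fin n) → ℝ)
    (hu : ∀ x, u x = x ⟨n - 1, il hn⟩ +
      Real.sqrt 2 * b (WithLp.toLp 2 ![x ⟨0, i0 hn⟩, x ⟨1, i1 hn⟩]))
    (x : EuclideanSpace ℝ (Fin n)) :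
    gradient u x (⟨n - 1, il hn⟩ : Fin n) = 1 := by
  rw [grad_u hn b hb u hu x, if_neg (by simp [Fin.ext_iff]; omega),
    if_neg (by simp [Fin.ext_iff]; omega), if_pos rfl]

lemma numer_eq {n : ℕ} (hn : 3 ≤ n)
    (b : EuclideanSpace ℝ (Fin 2) → ℝ) (hb : ContDiff ℝ (⊤ : ℕ∞) b)
    (u : EuclideanSpace ℝ (Fin n) → ℝ)
    (hu : ∀ x, u x = x ⟨n - 1, il hn⟩ +
      Real.sqrt 2 * b (WithLp.toLp 2 ![x ⟨0, i0 hn⟩, x ⟨1, i1 hn⟩]))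
    (x : EuclideanSpace ℝ (Fin n)) :
    ((Real.sqrt 2)⁻¹ - (inner ℝ (gradient u x)
        (-(Real.sqrt 2)⁻¹ • EuclideanSpace.single (⟨n - 1, il hn⟩ : Fin n) 1) : ℝ)) =
      Real.sqrt 2 := by
  rw [real_inner_smul_right, EuclideanSpace.inner_single_right]
  simp only [RCLike.star_def, conj_trivial, one_mul]
  rw [grad_u_last hn b hb u hu x]
  have h2 : Real.sqrt 2 * Real.sqrt 2 = 2 := Real.mul_self_sqrt (by norm_num)
  field_simp
  linarith [h2]

lemma H_eq {n : ℕ} (hn : 3 ≤ n)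
    (b : EuclideanSpace ℝ (Fin 2) → ℝ) (hb : ContDiff ℝ (⊤ : ℕ∞) b)
    (u : EuclideanSpace ℝ (Fin n) → ℝ)
    (hu : ∀ x, u x = x ⟨n - 1, il hn⟩ +
      Real.sqrt 2 * b (WithLp.toLp 2 ![x ⟨0, i0 hn⟩, x ⟨1, i1 hn⟩]))
    (x : EuclideanSpace ℝ (Fin n)) :
    ((Real.sqrt 2)⁻¹ - (inner ℝ (gradient u x)
        (-(Real.sqrt 2)⁻¹ • EuclideanSpace.single (⟨n - 1, il hn⟩ : Fin n) 1) : ℝ)) /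
      Real.sqrt (1 + ‖gradient u x‖ ^ 2) =
    1 / Real.sqrt (1 + ‖gradient b (pr n hn x)‖ ^ 2) := by
  rw [numer_eq hn b hb u hu x, sqrt_norm_u hn b hb u hu x]
  rw [div_mul_eq_div_div, div_self sqrt2_ne]

end RPTaux

open RPTaux in
/-- For `n ≥ 3`, rotating the product `B × ℝ^{n-2}` of a vertical graphical translator
`b` in ℝ³ with a Euclidean factor produces an entire graphical translator
`u(x) = xₙ + √2 b(x₁,x₂)` in ℝ^{n+1} with the non-vertical unit velocity
`T = (−eₙ + e_{n+1})/√2`, whose mean curvature equals `1/√(1+|Db|²) > 0`. -/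
theorem rotated_product_translator_counterexample
    (n : ℕ) (hn : 3 ≤ n)
    (b : EuclideanSpace ℝ (Fin 2) → ℝ) (hb : ContDiff ℝ (⊤ : ℕ∞) b)
    (htrb : IsTranslator Set.univ b 0 1)
    (u : EuclideanSpace ℝ (Fin n) → ℝ)
    (hu : ∀ x, u x = x ⟨n - 1, by omega⟩ +
      Real.sqrt 2 * b (WithLp.toLp 2 ![x ⟨0, by omega⟩, x ⟨1, by omega⟩])) :
    IsTranslator Set.univ u
        (-(Real.sqrt 2)⁻¹ • EuclideanSpace.single (⟨n - 1, by omega⟩ : Fin n) 1)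
        ((Real.sqrt 2)⁻¹) ∧
    ∀ x, ((Real.sqrt 2)⁻¹ - (inner ℝ (gradient u x)
          (-(Real.sqrt 2)⁻¹ • EuclideanSpace.single (⟨n - 1, by omega⟩ : Fin n) 1) : ℝ)) /
        Real.sqrt (1 + ‖gradient u x‖ ^ 2) =
      1 / Real.sqrt (1 + ‖gradient b (WithLp.toLp 2 ![x ⟨0, by omega⟩, x ⟨1, by omega⟩])‖ ^ 2) ∧
      0 < ((Real.sqrt 2)⁻¹ - (inner ℝ (gradient u x)
          (-(Real.sqrt 2)⁻¹ • EuclideanSpace.single (⟨n - 1, by omega⟩ : Fin n) 1) : ℝ)) /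
        Real.sqrt (1 + ‖gradient u x‖ ^ 2) := by
  refine ⟨?_, fun x => ⟨H_eq hn b hb u hu x, ?_⟩⟩
  · intro x hx
    have key := fun i => term_eval hn b hb u hu x i
    rw [Finset.sum_congr rfl fun i _ => key i]
    have hsplit : ∀ i : Fin n,
        (if i = (⟨0, by omega⟩ : Fin n) then
          fderiv ℝ (fun z => gradient b z 0 / Real.sqrt (1 + ‖gradient b z‖ ^ 2)) (pr n hn x)
            (EuclideanSpace.single 0 1)
        else if i = (⟨1, by omega⟩ : Fin n) then
          fderiv ℝ (fun z => gradient b z 1 / Real.sqrt (1 + ‖gradient b z‖ ^ 2)) (pr n hn x)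
            (EuclideanSpace.single 1 1)
        else 0) =
        (if i = (⟨0, by omega⟩ : Fin n) then
          fderiv ℝ (fun z => gradient b z 0 / Real.sqrt (1 + ‖gradient b z‖ ^ 2)) (pr n hn x)
            (EuclideanSpace.single 0 1) else 0) +
        (if i = (⟨1, by omega⟩ : Fin n) then
          fderiv ℝ (fun z => gradient b z 1 / Real.sqrt (1 + ‖gradient b z‖ ^ 2)) (pr n hn x)
            (EuclideanSpace.single 1 1) else 0) := by
      intro i
      by_cases h0 : i = (⟨0, by omega⟩ : Fin n)
      · subst h0
        rw [if_pos rfl, if_pos rfl, if_neg (by simp [Fin.ext_iff]), add_zero]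
      · rw [if_neg h0, if_neg h0, zero_add]
    rw [Finset.sum_congr rfl fun i _ => hsplit i, Finset.sum_add_distrib]
    simp only [Finset.sum_ite_eq', Finset.mem_univ, if_true]
    have hb2 := htrb (pr n hn x) (Set.mem_univ _)
    rw [Fin.sum_univ_two] at hb2
    rw [hb2, inner_zero_right, sub_zero, H_eq hn b hb u hu x]
  · rw [H_eq hn b hb u hu x]
    positivity


end
end

section
/- For every θ ∈ [0, π/2), the tilted grim reaper function u(x, y) = −log(cos(x·cos θ))/cos²θ − y·tan θ, defined on the slab Ω = (−π/(2 cos θ), π/(2 cos θ)) × ℝ ⊆ ℝ², is a graphical translator with vertical velocity e₃: it satisfies ∑_{i=1}^{2} ∂_i( ∂_i u / √(1+|Du|²) ) = 1/√(1+|Du|²) on Ω. -/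
/-!
Write `a = cos θ`, `c = tan θ`. The function is `f (x 0) - x 1 * c` with
`f t = -log (cos (t a)) / a²`, so its gradient is `(p (x 0), -c)` with `p t = tan (t a) / a`, and
the translator equation collapses to the ODE `(p / W)' = 1 / W`, `W = √(1 + p² + c²)`.
Since `(p / W)' = p' (1 + c²) / W³`, this is `p' (1 + c²) = W²`, which holds because
`p' = 1 / cos² (t a)` and `1 + c² = 1 / a²`.
-/

open scoped ENNReal
open MeasureTheory

noncomputable section

open Real

theorem hasDerivAt_div_sqrt_of_ode {p : ℝ → ℝ} {p' c t : ℝ} (hp : HasDerivAt p p' t)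
    (hode : p' * (1 + c ^ 2) = 1 + p t ^ 2 + c ^ 2) :
    HasDerivAt (fun s => p s / √(1 + p s ^ 2 + c ^ 2)) (1 / √(1 + p t ^ 2 + c ^ 2)) t := by
  have hW : 0 < 1 + p t ^ 2 + c ^ 2 := by positivity
  have hsq : √(1 + p t ^ 2 + c ^ 2) ^ 2 = 1 + p t ^ 2 + c ^ 2 := sq_sqrt hW.le
  refine (hp.fun_div ((((hp.fun_pow 2).const_add 1).add_const (c ^ 2)).sqrt hW.ne')
    (sqrt_pos.2 hW).ne').congr_deriv ?_
  field_simp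
  norm_num
  linear_combination (2 * p' - 2) * hsq + 2 * hode

theorem hasFDerivAt_comp_apply {n : ℕ} {g : ℝ → ℝ} {g' : ℝ} (j : Fin n)
    {x : EuclideanSpace ℝ (Fin n)} (hg : HasDerivAt g g' (x j)) :
    HasFDerivAt (fun y : EuclideanSpace ℝ (Fin n) => g (y j))
      (g' • EuclideanSpace.proj (𝕜 := ℝ) j) x :=
  hg.comp_hasFDerivAt x (EuclideanSpace.proj (𝕜 := ℝ) j).hasFDerivAt

theorem hasGradientAt_comp_apply_zero_sub_mul {f : ℝ → ℝ} {f' c : ℝ}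
    {x : EuclideanSpace ℝ (Fin 2)} (hf : HasDerivAt f f' (x 0)) :
    HasGradientAt (fun y : EuclideanSpace ℝ (Fin 2) => f (y 0) - y 1 * c) !₂[f', -c] x := by
  rw [hasGradientAt_iff_hasFDerivAt]
  refine ((hasFDerivAt_comp_apply 0 hf).sub
    ((EuclideanSpace.proj (𝕜 := ℝ) 1).hasFDerivAt.mul_const c)).congr_fderiv ?_
  ext v
  simp [PiLp.inner_apply, Fin.sum_univ_two]
  ring

theorem isTranslator_of_ode {f p p' : ℝ → ℝ} {c : ℝ} {I : Set ℝ} (hI : IsOpen I)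
    (hf : ∀ t ∈ I, HasDerivAt f (p t) t) (hp : ∀ t ∈ I, HasDerivAt p (p' t) t)
    (hode : ∀ t ∈ I, p' t * (1 + c ^ 2) = 1 + p t ^ 2 + c ^ 2) :
    IsTranslator {x : EuclideanSpace ℝ (Fin 2) | x 0 ∈ I} (fun x => f (x 0) - x 1 * c) 0 1 := by
  intro x hx
  set u : EuclideanSpace ℝ (Fin 2) → ℝ := fun x => f (x 0) - x 1 * c
  set W : ℝ → ℝ := fun s => √(1 + p s ^ 2 + c ^ 2)
  have hgrad : ∀ y : EuclideanSpace ℝ (Fin 2), y 0 ∈ I → gradient u y = !₂[p (y 0), -c] :=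
    fun y hy => (hasGradientAt_comp_apply_zero_sub_mul (hf _ hy)).gradient
  have hnorm : ∀ s, √(1 + ‖!₂[p s, -c]‖ ^ 2) = W s := by
    simp [W, EuclideanSpace.norm_sq_eq, Fin.sum_univ_two, add_assoc]
  have hnear : ∀ᶠ y in nhds x, y 0 ∈ I :=
    (hI.preimage (EuclideanSpace.proj (𝕜 := ℝ) (0 : Fin 2)).continuous).mem_nhds hx
  have hfderiv0 : fderiv ℝ (fun y => gradient u y 0 / √(1 + ‖gradient u y‖ ^ 2)) x =
      fderiv ℝ (fun y => p (y 0) / W (y 0)) x :=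
    Filter.EventuallyEq.fderiv_eq <| by filter_upwards [hnear] with y hy; simp [hgrad y hy, hnorm]
  have hfderiv1 : fderiv ℝ (fun y => gradient u y 1 / √(1 + ‖gradient u y‖ ^ 2)) x =
      fderiv ℝ (fun y => -c / W (y 0)) x :=
    Filter.EventuallyEq.fderiv_eq <| by filter_upwards [hnear] with y hy; simp [hgrad y hy, hnorm]
  have hW : HasDerivAt W _ (x 0) :=
    (((hp _ hx).fun_pow 2).const_add 1 |>.add_const (c ^ 2)).sqrt (by positivity)
  have hW0 : W (x 0) ≠ 0 := (sqrt_pos.2 (by positivity)).ne'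
  have hc : HasDerivAt (fun s => -c / W s) _ (x 0) := (hasDerivAt_const _ (-c)).div hW hW0
  rw [Fin.sum_univ_two, hfderiv0, hfderiv1, hgrad x hx, hnorm,
    (hasFDerivAt_comp_apply 0 (hasDerivAt_div_sqrt_of_ode (hp _ hx) (hode _ hx))).fderiv,
    (hasFDerivAt_comp_apply 0 hc).fderiv]
  simp [W]

theorem cos_mul_pos_of_mem_Ioo {a t : ℝ} (ha : 0 < a)
    (ht : t ∈ Set.Ioo (-(π / (2 * a))) (π / (2 * a))) : 0 < cos (t * a) := by
  rw [div_mul_eq_div_div, ← neg_div] at ht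
  exact cos_pos_of_mem_Ioo ⟨(div_lt_iff₀ ha).1 ht.1, (lt_div_iff₀ ha).1 ht.2⟩

theorem hasDerivAt_neg_log_cos_mul_div_sq {a t : ℝ} (ha : a ≠ 0) (ht : cos (t * a) ≠ 0) :
    HasDerivAt (fun s => -log (cos (s * a)) / a ^ 2) (tan (t * a) / a) t := by
  have hcos := (((hasDerivAt_id t).mul_const a).cos.log ht).neg.div_const (a ^ 2)
  refine hcos.congr_deriv ?_
  rw [tan_eq_sin_div_cos]
  field_simp
  simp [mul_comm]

theorem hasDerivAt_tan_mul_div {a t : ℝ} (ha : a ≠ 0) (ht : cos (t * a) ≠ 0) :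
    HasDerivAt (fun s => tan (s * a) / a) (1 / cos (t * a) ^ 2) t := by
  refine ((hasDerivAt_tan ht).comp t ((hasDerivAt_id t).mul_const a) |>.div_const a).congr_deriv ?_
  field_simp

theorem one_div_cos_sq_mul_one_add_tan_sq {x y : ℝ} (hx : cos x ≠ 0) (hy : cos y ≠ 0) :
    1 / cos y ^ 2 * (1 + tan x ^ 2) = 1 + (tan y / cos x) ^ 2 + tan x ^ 2 := by
  rw [tan_eq_sin_div_cos, tan_eq_sin_div_cos]
  field_simp
  linear_combination (1 - cos y ^ 2) * sin_sq_add_cos_sq x - sin_sq_add_cos_sq y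

/-- The tilted grim reaper `u(x,y) = −log(cos(x cos θ))/cos²θ − y tan θ`, defined on
the slab `|x| < π/(2 cos θ)`, is a graphical translator with vertical velocity `e₃`. -/
theorem tilted_grim_reaper_is_vertical_translator
    (θ : ℝ) (hθ : θ ∈ Set.Ico 0 (Real.pi / 2)) :
    IsTranslator
      {x : EuclideanSpace ℝ (Fin 2) |
        -(Real.pi / (2 * Real.cos θ)) < x 0 ∧ x 0 < Real.pi / (2 * Real.cos θ)}
      (fun x => -Real.log (Real.cos (x 0 * Real.cos θ)) / Real.cos θ ^ 2 -
        x 1 * Real.tan θ)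
      0 1 := by
  have ha : 0 < cos θ := cos_pos_of_mem_Ioo ⟨by linarith [pi_pos, hθ.1], hθ.2⟩
  have hcos : ∀ t ∈ Set.Ioo (-(π / (2 * cos θ))) (π / (2 * cos θ)), cos (t * cos θ) ≠ 0 :=
    fun t ht => (cos_mul_pos_of_mem_Ioo ha ht).ne'
  exact isTranslator_of_ode (f := fun t => -log (cos (t * cos θ)) / cos θ ^ 2)
    (p := fun t => tan (t * cos θ) / cos θ) (p' := fun t => 1 / cos (t * cos θ) ^ 2)
    (I := Set.Ioo (-(π / (2 * cos θ))) (π / (2 * cos θ))) isOpen_Ioo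
    (fun t ht => hasDerivAt_neg_log_cos_mul_div_sq ha.ne' (hcos t ht))
    (fun t ht => hasDerivAt_tan_mul_div ha.ne' (hcos t ht))
    (fun t ht => one_div_cos_sq_mul_one_add_tan_sq ha.ne' (hcos t ht))

end
end
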